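/- Consider the complete binary tree of depth n, whose vertices are the binary strings of length at most n − 1 (the root is the empty string, and the children of a vertex v are v·0 and v·1). A skipping tree of depth d inside it is a map φ from binary strings of length at most d − 1 to binary strings of length at most n − 1 such that for every binary string s of length at most d − 2 and every bit b ∈ {0,1}, the string φ(s)·b is a prefix of φ(s·b). If the vertices of the depth-n complete binary tree are colored with k colors, where k and d are positive integers and n ≥ k·(d − 1) + 1, then there exist a color c and a skipping tree φ of depth d such that every vertex φ(s) has color c. -/
import Mathlib

section Aux
variable {k : ℕ} (n : ℕ) (coloring : List Bool → Fin k)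

/-- A monochromatic skipping tree of color `c`, depth `m`, rooted at an extension of `v`. -/
def Mono18 (c : Fin k) (m : ℕ) (v : List Bool) : Prop :=
  ∃ φ : List Bool → List Bool,
    (∀ s : List Bool, s.length + 1 ≤ m → (φ s).length + 1 ≤ n) ∧
    (∀ (s : List Bool) (b : Bool), s.length + 2 ≤ m → (φ s ++ [b]) <+: φ (s ++ [b])) ∧
    (∀ s : List Bool, s.length + 1 ≤ m → coloring (φ s) = c) ∧
    v <+: φ []

lemma mono18_zero (c : Fin k) (v : List Bool) : Mono18 n coloring c 0 v :=
  ⟨fun _ => v, fun s hs => by omega, fun s b hs => by omega, fun s hs => by omega,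
    List.prefix_refl v⟩

lemma mono18_down {c : Fin k} {m m' : ℕ} {v : List Bool} (h : m' ≤ m)
    (hm : Mono18 n coloring c m v) : Mono18 n coloring c m' v := by
  obtain ⟨φ, h1, h2, h3, h4⟩ := hm
  exact ⟨φ, fun s hs => h1 s (by omega), fun s b hs => h2 s b (by omega),
    fun s hs => h3 s (by omega), h4⟩

lemma mono18_root_ext {c : Fin k} {m : ℕ} {v : List Bool} {b : Bool}
    (hm : Mono18 n coloring c m (v ++ [b])) : Mono18 n coloring c m v := by
  obtain ⟨φ, h1, h2, h3, h4⟩ := hm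
  exact ⟨φ, h1, h2, h3, ((v.prefix_append [b]).trans h4)⟩

lemma mono18_one {v : List Bool} (hv : v.length + 1 ≤ n) :
    Mono18 n coloring (coloring v) 1 v :=
  ⟨fun _ => v, fun s _ => hv, fun s b hs => by omega, fun s _ => rfl, List.prefix_refl v⟩

def glue18 (v : List Bool) (φf φt : List Bool → List Bool) : List Bool → List Bool
  | [] => v
  | false :: s => φf s
  | true :: s => φt s

lemma mono18_combine {c : Fin k} {m : ℕ} {v : List Bool} (hv : v.length + 1 ≤ n)
    (hc : coloring v = c)
    (hf : Mono18 n coloring c m (v ++ [false]))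
    (ht : Mono18 n coloring c m (v ++ [true])) :
    Mono18 n coloring c (m + 1) v := by
  obtain ⟨φf, hf1, hf2, hf3, hf4⟩ := hf
  obtain ⟨φt, ht1, ht2, ht3, ht4⟩ := ht
  refine ⟨glue18 v φf φt, ?_, ?_, ?_, List.prefix_refl v⟩
  · rintro (_ | ⟨(_ | _), s⟩) hs
    · simpa [glue18] using hv
    · simpa [glue18] using hf1 s (by simpa using hs)
    · simpa [glue18] using ht1 s (by simpa using hs)
  · rintro (_ | ⟨(_ | _), s⟩) b hs
    · cases b
      · simpa [glue18] using hf4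
      · simpa [glue18] using ht4
    · simpa [glue18] using hf2 s b (by simp at hs; omega)
    · simpa [glue18] using ht2 s b (by simp at hs; omega)
  · rintro (_ | ⟨(_ | _), s⟩) hs
    · simpa [glue18] using hc
    · simpa [glue18] using hf3 s (by simpa using hs)
    · simpa [glue18] using ht3 s (by simpa using hs)

attribute [local instance] Classical.propDecidable

noncomputable def g18 (d : ℕ) (c : Fin k) (v : List Bool) : ℕ :=
  Nat.findGreatest (fun m => Mono18 n coloring c m v) d

lemma g18_spec (d : ℕ) (c : Fin k) (v : List Bool) :
    Mono18 n coloring c (g18 n coloring d c v) v := by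
  unfold g18
  exact Nat.findGreatest_spec (P := fun m => Mono18 n coloring c m v) (Nat.zero_le d) (mono18_zero n coloring c v)

lemma g18_le (d : ℕ) (c : Fin k) (v : List Bool) : g18 n coloring d c v ≤ d :=
  Nat.findGreatest_le d

lemma le_g18 {d m : ℕ} {c : Fin k} {v : List Bool} (hm : m ≤ d)
    (h : Mono18 n coloring c m v) : m ≤ g18 n coloring d c v := by
  unfold g18
  exact Nat.le_findGreatest hm h

lemma g18_lt (d : ℕ) {c : Fin k} {v : List Bool}
    (hnod : ∀ (c : Fin k) (v : List Bool), ¬ Mono18 n coloring c d v) :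
    g18 n coloring d c v < d := by
  rcases lt_or_eq_of_le (g18_le n coloring d c v) with h | h
  · exact h
  · exact absurd (h ▸ g18_spec n coloring d c v) (hnod c v)

lemma g18_mono (d : ℕ) (c : Fin k) (v : List Bool) (b : Bool) :
    g18 n coloring d c (v ++ [b]) ≤ g18 n coloring d c v :=
  le_g18 n coloring (g18_le n coloring d c (v ++ [b]))
    (mono18_root_ext n coloring (g18_spec n coloring d c (v ++ [b])))

lemma g18_decrease (d : ℕ) {v : List Bool} (hv : v.length + 2 ≤ n)
    (hnod : ∀ (c : Fin k) (v : List Bool), ¬ Mono18 n coloring c d v) :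
    ∃ b : Bool, g18 n coloring d (coloring v) (v ++ [b]) < g18 n coloring d (coloring v) v := by
  by_contra h
  push_neg at h
  set c := coloring v
  set m := g18 n coloring d c v with hm
  have hmono : ∀ b : Bool, Mono18 n coloring c m (v ++ [b]) := fun b =>
    mono18_down n coloring (h b) (g18_spec n coloring d c (v ++ [b]))
  have hcomb : Mono18 n coloring c (m + 1) v :=
    mono18_combine n coloring (by omega) rfl (hmono false) (hmono true)
  have : m + 1 ≤ m := le_g18 n coloring (g18_lt n coloring d hnod) hcomb
  omega

end Aux

/-- if the vertices (binary strings of length ≤ n−1, the root being the empty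
string) of the complete binary tree of depth n are colored with k colors, and
n ≥ k·(d−1) + 1, then there is a monochromatic skipping tree of depth d: a map φ from
strings of length ≤ d−1 to strings of length ≤ n−1 such that for every string s of length
≤ d−2 and bit b, the string φ(s)·b is a prefix of φ(s·b), and all vertices φ(s) have the
same color.  (Length conditions `ℓ ≤ m − 1` and `ℓ ≤ m − 2` are written as `ℓ + 1 ≤ m`
and `ℓ + 2 ≤ m` to avoid truncated natural subtraction.) -/
theorem stmt18 (n k d : ℕ) (hk : 0 < k) (hd : 0 < d) (hn : k * (d - 1) + 1 ≤ n)
    (coloring : List Bool → Fin k) :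
    ∃ (c : Fin k) (φ : List Bool → List Bool),
      (∀ s : List Bool, s.length + 1 ≤ d → (φ s).length + 1 ≤ n) ∧
      (∀ (s : List Bool) (b : Bool), s.length + 2 ≤ d → (φ s ++ [b]) <+: φ (s ++ [b])) ∧
      (∀ s : List Bool, s.length + 1 ≤ d → coloring (φ s) = c) := by
  by_contra hcon
  have hnod : ∀ (c : Fin k) (v : List Bool), ¬ Mono18 n coloring c d v := by
    rintro c v ⟨φ, h1, h2, h3, _⟩
    exact hcon ⟨c, φ, h1, h2, h3⟩
  -- potential function
  set S : List Bool → ℕ := fun v => ∑ c : Fin k, g18 n coloring d c v with hS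
  have hS_decrease : ∀ v : List Bool, v.length + 2 ≤ n → ∃ b : Bool, S (v ++ [b]) < S v := by
    intro v hv
    obtain ⟨b, hb⟩ := g18_decrease n coloring d hv hnod
    refine ⟨b, Finset.sum_lt_sum (fun c _ => g18_mono n coloring d c v b)
      ⟨coloring v, Finset.mem_univ _, hb⟩⟩
  have hchain : ∀ i : ℕ, i + 1 ≤ n → ∃ v : List Bool, v.length = i ∧ S v + i ≤ k * (d - 1) := by
    intro i
    induction i with
    | zero =>
      intro _
      refine ⟨[], rfl, ?_⟩
      have : S [] ≤ ∑ _c : Fin k, (d - 1) := by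
        refine Finset.sum_le_sum fun c _ => ?_
        have := g18_lt n coloring d hnod (c := c) (v := [])
        omega
      simpa using this.trans (by simp [Finset.sum_const, mul_comm])
    | succ i ih =>
      intro hi
      obtain ⟨v, hvl, hvS⟩ := ih (by omega)
      obtain ⟨b, hb⟩ := hS_decrease v (by omega)
      exact ⟨v ++ [b], by simp [hvl], by omega⟩
  have hn1 : 1 ≤ n := by omega
  obtain ⟨v, hvl, hvS⟩ := hchain (n - 1) (by omega)
  have hvlen : v.length + 1 ≤ n := by omega
  have h1 : 1 ≤ S v := by
    have h1g : 1 ≤ g18 n coloring d (coloring v) v :=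
      le_g18 n coloring hd (mono18_one n coloring hvlen)
    calc 1 ≤ g18 n coloring d (coloring v) v := h1g
      _ ≤ S v := Finset.single_le_sum (f := fun c : Fin k => g18 n coloring d c v)
        (fun c _ => Nat.zero_le _) (Finset.mem_univ (coloring v))
  omega
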